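/- If v is a factor of w with |v| > 3, then there exists a factor u of w with |u| ≤ (|v|+4)/3 such that v is a factor of f(u). -/

import Mathlib

/-
Since `f` is `3`-uniform and `w` is its fixed point, `f` maps the factor of `w` at positions
`[s, s + n)` onto the factor at positions `[3s, 3s + 3n)`. A factor `v` of `w` at positions
`[i, i + |v|)` therefore lies inside `f(u)` for the factor `u` of `w` at positions
`[⌊i/3⌋, ⌈(i + |v|)/3⌉)`, and `3|u| ≤ (i + |v| + 2) - (i - 2) = |v| + 4`.
-/

/-- The four-letter alphabet `A₄ = {1,2,3,4}`; the value `k : Fin 4` represents letter `k+1`. -/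
abbrev A4 := Fin 4

/-- The morphism `f` on letters: `f(1)=121, f(2)=123, f(3)=141, f(4)=142`
(letters `1,2,3,4` encoded as `0,1,2,3`). -/
def fm : A4 → List A4
  | 0 => [0, 1, 0]
  | 1 => [0, 1, 2]
  | 2 => [0, 3, 0]
  | 3 => [0, 3, 1]

/-- The morphism `f` extended to words by concatenation. -/
def fw (u : List A4) : List A4 := u.flatMap fm

/-- The fixed point `w` of `f` starting with the letter `1`: since `|f^k(1)| = 3^k` and each
`f^k(1)` is a prefix of `f^(k+1)(1)`, the `n`-th letter of `w` is the `n`-th letter of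
`f^(n+1)(1)`. -/
def w (n : ℕ) : A4 := ((fw^[n + 1]) [0]).getD n 0

/-- The finite word `t` occurs at position `i` in the infinite word `x`. -/
def OccursAt {α : Type*} (t : List α) (x : ℕ → α) (i : ℕ) : Prop :=
  t = (List.range t.length).map fun k => x (i + k)

/-- The finite word `v` is a factor of the infinite word `x`. -/
def FactorOf {α : Type*} (v : List α) (x : ℕ → α) : Prop :=
  ∃ i, OccursAt v x i

/-- The finite word `v` has period `q ≥ 1`: `v(j) = v(j+q)` whenever `0 ≤ j < |v| - q`. -/
def HasPeriod {α : Type*} (v : List α) (q : ℕ) : Prop :=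
  1 ≤ q ∧ ∀ j, j + q < v.length → v[j]? = v[j + q]?

/-- A word lies in `ker ψ` if each letter of `A₄` occurs in it a number of times
divisible by `4`. -/
def InKerPsi (u : List A4) : Prop := ∀ a : A4, 4 ∣ u.count a

/-- `q` is a kernel period of `v`: `1 ≤ q ≤ |v|`, `v` has period `q`, and the prefix of `v`
of length `q` lies in `ker ψ`. -/
def KernelPeriod (v : List A4) (q : ℕ) : Prop :=
  q ≤ v.length ∧ HasPeriod v q ∧ InKerPsi (v.take q)

section UniformMorphism

variable {α β : Type*} {g : α → List β} {k : ℕ}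

lemma length_flatMap_of_length_eq (hg : ∀ a, (g a).length = k) (u : List α) :
    (u.flatMap g).length = k * u.length := by
  induction u with
  | nil => simp
  | cons a u ih => simp only [List.flatMap_cons, List.length_append, hg, ih, List.length_cons]; ring

lemma flatMap_take_of_length_eq (hg : ∀ a, (g a).length = k) (u : List α) (n : ℕ) :
    (u.take n).flatMap g = (u.flatMap g).take (k * n) := by
  induction u generalizing n with
  | nil => simp
  | cons a u ih =>
    cases n with
    | zero => simp
    | succ n =>
      rw [List.take_succ_cons, List.flatMap_cons, List.flatMap_cons, ih,
        show k * (n + 1) = (g a).length + k * n by rw [hg]; ring, List.take_length_add_append]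

lemma flatMap_drop_of_length_eq (hg : ∀ a, (g a).length = k) (u : List α) (n : ℕ) :
    (u.drop n).flatMap g = (u.flatMap g).drop (k * n) := by
  induction u generalizing n with
  | nil => simp
  | cons a u ih =>
    cases n with
    | zero => simp
    | succ n =>
      rw [List.drop_succ_cons, ih, List.flatMap_cons,
        show k * (n + 1) = (g a).length + k * n by rw [hg]; ring, List.drop_length_add_append]

end UniformMorphism

section Factors

variable {α : Type*} (x : ℕ → α)

def factorAt (i n : ℕ) : List α := (List.range n).map fun k => x (i + k)

@[simp]
lemma length_factorAt (i n : ℕ) : (factorAt x i n).length = n := by simp [factorAt]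

lemma factorOf_factorAt (i n : ℕ) : FactorOf (factorAt x i n) x := ⟨i, by simp [OccursAt, factorAt]⟩

lemma take_factorAt {m n : ℕ} (i : ℕ) (h : m ≤ n) : (factorAt x i n).take m = factorAt x i m := by
  simp [factorAt, ← List.map_take, List.take_range, h]

lemma drop_factorAt (i m n : ℕ) : (factorAt x i n).drop m = factorAt x (i + m) (n - m) := by
  apply List.ext_getElem (by simp)
  intro j _ _
  simp [factorAt, Nat.add_assoc]

lemma factorAt_infix_factorAt {i n s m : ℕ} (hs : s ≤ i) (hm : i + n ≤ s + m) :
    factorAt x i n <:+: factorAt x s m := by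
  have : factorAt x i n = ((factorAt x s m).drop (i - s)).take n := by
    rw [drop_factorAt, take_factorAt _ _ (by omega), Nat.add_sub_cancel' hs]
  rw [this]
  exact (List.take_prefix _ _).isInfix.trans (List.drop_suffix _ _).isInfix

end Factors

lemma fm_length (a : A4) : (fm a).length = 3 := by fin_cases a <;> rfl

lemma fw_length (u : List A4) : (fw u).length = 3 * u.length :=
  length_flatMap_of_length_eq fm_length u

lemma iterate_fw_length (k : ℕ) : (fw^[k] [0]).length = 3 ^ k := by
  induction k with
  | zero => rfl
  | succ k ih => rw [Function.iterate_succ_apply', fw_length, ih, pow_succ, mul_comm]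

lemma fw_prefix_fw {u v : List A4} (h : u <+: v) : fw u <+: fw v := by
  obtain ⟨t, rfl⟩ := h
  exact ⟨fw t, List.flatMap_append.symm⟩

lemma iterate_fw_prefix_succ (k : ℕ) : fw^[k] [0] <+: fw^[k + 1] [0] := by
  induction k with
  | zero => exact ⟨[1, 0], rfl⟩
  | succ k ih => simpa only [Function.iterate_succ_apply'] using fw_prefix_fw ih

lemma iterate_fw_prefix {k m : ℕ} (h : k ≤ m) : fw^[k] [0] <+: fw^[m] [0] := by
  induction m, h using Nat.le_induction with
  | base => exact List.prefix_refl _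
  | succ m _ ih => exact ih.trans (iterate_fw_prefix_succ m)

lemma iterate_fw_eq_factorAt (k : ℕ) : fw^[k] [0] = factorAt w 0 (3 ^ k) := by
  apply List.ext_getElem (by simp [iterate_fw_length])
  intro n hk _
  have hn : n < (fw^[n + 1] [0]).length := by
    rw [iterate_fw_length]
    exact (Nat.lt_pow_self (by norm_num)).trans_le (Nat.pow_le_pow_right (by norm_num) n.le_succ)
  simp only [factorAt, List.getElem_map, List.getElem_range, zero_add, w,
    List.getD_eq_getElem _ _ hn]
  -- `fw^[k] [0]` and `fw^[n + 1] [0]` (which defines `w n`) are prefixes of a common iterate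
  rw [(iterate_fw_prefix (le_max_left k (n + 1))).getElem hk,
    (iterate_fw_prefix (le_max_right k (n + 1))).getElem hn]

lemma fw_factorAt_zero (n : ℕ) : fw (factorAt w 0 n) = factorAt w 0 (3 * n) := by
  have hn : n ≤ 3 ^ n := (Nat.lt_pow_self (by norm_num)).le
  calc fw (factorAt w 0 n) = fw ((fw^[n] [0]).take n) := by
        rw [iterate_fw_eq_factorAt, take_factorAt _ _ hn]
    _ = (fw^[n + 1] [0]).take (3 * n) := by
        rw [fw, flatMap_take_of_length_eq fm_length, Function.iterate_succ_apply']; rfl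
    _ = factorAt w 0 (3 * n) := by
        rw [iterate_fw_eq_factorAt, take_factorAt _ _ (by rw [pow_succ]; omega)]

lemma fw_factorAt (s n : ℕ) : fw (factorAt w s n) = factorAt w (3 * s) (3 * n) := by
  have := congrArg (·.drop (3 * s)) (fw_factorAt_zero (s + n))
  simp only [fw, ← flatMap_drop_of_length_eq fm_length, drop_factorAt] at this
  simpa [fw, mul_add] using this

theorem stmt15_general (v : List A4) (hfac : FactorOf v w) :
    ∃ u : List A4, FactorOf u w ∧ 3 * u.length ≤ v.length + 4 ∧ v <:+: fw u := by
  obtain ⟨i, hocc : v = factorAt w i v.length⟩ := hfac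
  set n := v.length
  refine ⟨factorAt w (i / 3) ((i + n + 2) / 3 - i / 3), factorOf_factorAt _ _ _, ?_, ?_⟩
  · rw [length_factorAt]; omega
  · rw [hocc, fw_factorAt]
    exact factorAt_infix_factorAt w (by omega) (by omega)

/-- If `v` is a factor of `w` with `|v| > 3`, then `v` is a factor of `f(u)` for some factor
`u` of `w` with `|u| ≤ (|v|+4)/3` (i.e. `3|u| ≤ |v|+4`). -/
theorem stmt15 (v : List A4) (hfac : FactorOf v w) (hlen : 3 < v.length) :
    ∃ u : List A4, FactorOf u w ∧ 3 * u.length ≤ v.length + 4 ∧ v <:+: fw u :=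
  stmt15_general v hfac
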